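/- Let s ≥ 1, let x be a list of Booleans, and let y be obtained from x by deleting the symbol at some position i (y = x.eraseIdx i). Then the number of positions at which the pattern 1·0^s occurs in y and the number of positions at which it occurs in x differ by at most 1. -/

import Mathlib

/-- The pattern `P` occurs in the binary string `z` at position `p`. -/
def occursAt (P z : List Bool) (p : ℕ) : Prop :=
  (z.drop p).take P.length = P

/-- The header pattern `1·0^s`: the symbol 1 followed by `s` copies of 0. -/
def header (s : ℕ) : List Bool :=
  true :: List.replicate s false

/-- The number of positions at which the pattern `1·0^s` occurs in `z`. -/
noncomputable def occCount (s : ℕ) (z : List Bool) : ℕ :=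
  Set.ncard {p : ℕ | occursAt (header s) z p}

lemma getElem?_eraseIdx' {α} (l : List α) (i j : ℕ) :
    (l.eraseIdx i)[j]? = if j < i then l[j]? else l[j+1]? := by
  induction l generalizing i j with
  | nil => simp
  | cons a t ih =>
    cases i with
    | zero => simp
    | succ i =>
      cases j with
      | zero => simp
      | succ j => simpa [List.eraseIdx_cons_succ, Nat.succ_lt_succ_iff] using ih i j

lemma occursAt_iff (P z : List Bool) (p : ℕ) :
    occursAt P z p ↔ ∀ j < P.length, z[p + j]? = P[j]? := by
  constructor
  · intro h j hj
    have := congrArg (fun l => l[j]?) h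
    rw [← this, List.getElem?_take_of_lt hj, List.getElem?_drop]
  · intro h
    apply List.ext_getElem?
    intro n
    by_cases hn : n < P.length
    · rw [List.getElem?_take_of_lt hn, List.getElem?_drop]
      exact h n hn
    · rw [List.getElem?_eq_none (l := P) (by omega),
        List.getElem?_eq_none (by simp; omega)]

lemma header_length (s : ℕ) : (header s).length = s + 1 := by simp [header]

lemma header_zero (s : ℕ) : (header s)[0]? = some true := by simp [header]

lemma header_pos (s j : ℕ) (h1 : 1 ≤ j) (h2 : j ≤ s) : (header s)[j]? = some false := by
  obtain ⟨k, rfl⟩ : ∃ k, j = k + 1 := ⟨j - 1, by omega⟩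
  rw [header, List.getElem?_cons_succ, List.getElem?_replicate, if_pos (by omega)]

lemma no_overlap {s : ℕ} (hs : 1 ≤ s) {z : List Bool} {p q : ℕ}
    (hp : occursAt (header s) z p) (hq : occursAt (header s) z q)
    (h1 : p < q) (h2 : q ≤ p + s) : False := by
  rw [occursAt_iff] at hp hq
  have e1 := hq 0 (by rw [header_length]; omega)
  have e2 := hp (q - p) (by rw [header_length]; omega)
  rw [header_zero] at e1
  rw [header_pos s (q - p) (by omega) (by omega)] at e2
  rw [show p + (q - p) = q + 0 by omega] at e2
  rw [e1] at e2
  simp at e2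

lemma occ_finite (s : ℕ) (z : List Bool) : {p : ℕ | occursAt (header s) z p}.Finite := by
  apply Set.Finite.subset (Set.finite_Iio z.length)
  intro p hp
  simp only [Set.mem_setOf_eq, occursAt_iff] at hp
  have h := hp 0 (by rw [header_length]; omega)
  rw [header_zero] at h
  by_contra hlen
  rw [List.getElem?_eq_none (by simp at hlen ⊢; omega)] at h
  simp at h

/-- A single deletion changes the number of occurrences of the header
pattern `1·0^s` by at most 1. -/
theorem stmt_5 (s : ℕ) (hs : 1 ≤ s) (x : List Bool) (i : ℕ)
    (y : List Bool) (hy : y = x.eraseIdx i) :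
    occCount s y ≤ occCount s x + 1 ∧ occCount s x ≤ occCount s y + 1 := by
  have hget : ∀ j, y[j]? = if j < i then x[j]? else x[j+1]? := by
    intro j; rw [hy]; exact getElem?_eraseIdx' x i j
  have hfinY := occ_finite s y
  have hfinX := occ_finite s x
  set OY := {p : ℕ | occursAt (header s) y p} with hOY
  set OX := {p : ℕ | occursAt (header s) x p} with hOX
  rw [show occCount s y = OY.ncard from rfl, show occCount s x = OX.ncard from rfl]
  constructor
  · -- occCount y ≤ occCount x + 1
    set A := {p : ℕ | p ∈ OY ∧ (p + s < i ∨ i ≤ p)} with hA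
    set T := {p : ℕ | p ∈ OY ∧ i ≤ p + s ∧ p < i} with hT
    have hAfin : A.Finite := hfinY.subset (fun p hp => hp.1)
    have hTfin : T.Finite := hfinY.subset (fun p hp => hp.1)
    have hsub : OY ⊆ A ∪ T := by
      intro p hp; by_cases h : p + s < i ∨ i ≤ p
      · exact Or.inl ⟨hp, h⟩
      · push_neg at h; exact Or.inr ⟨hp, by omega⟩
    have hTcard : T.ncard ≤ 1 := by
      rw [Set.ncard_le_one hTfin]
      rintro a ⟨ha, ha1, ha2⟩ b ⟨hb, hb1, hb2⟩
      by_contra hne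
      rcases Nat.lt_or_ge a b with h | h
      · exact no_overlap hs ha hb h (by omega)
      · exact no_overlap hs hb ha (by omega) (by omega)
    have hAcard : A.ncard ≤ OX.ncard := by
      refine Set.ncard_le_ncard_of_injOn (fun p => if p < i then p else p + 1) ?_ ?_ hfinX
      · rintro p ⟨hp, hor⟩
        rw [hOY, Set.mem_setOf_eq, occursAt_iff] at hp
        show (if p < i then p else p + 1) ∈ OX
        rcases hor with h | h
        · rw [if_pos (by omega), hOX, Set.mem_setOf_eq, occursAt_iff]
          intro j hj
          rw [header_length] at hj
          rw [← hp j (by rw [header_length]; omega), hget, if_pos (by omega)]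
        · rw [if_neg (by omega), hOX, Set.mem_setOf_eq, occursAt_iff]
          intro j hj
          rw [header_length] at hj
          have hh := hp j (by rw [header_length]; omega)
          rw [hget, if_neg (by omega)] at hh
          rw [show p + 1 + j = p + j + 1 by omega, ← hh]
      · intro a _ b _ h
        have h' : (if a < i then a else a + 1) = (if b < i then b else b + 1) := h
        split_ifs at h' <;> omega
    have h1 : OY.ncard ≤ (A ∪ T).ncard := Set.ncard_le_ncard hsub (hAfin.union hTfin)
    have h2 : (A ∪ T).ncard ≤ A.ncard + T.ncard := Set.ncard_union_le A T
    omega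
  · -- occCount x ≤ occCount y + 1
    set B := {q : ℕ | q ∈ OX ∧ (q + s < i ∨ i < q)} with hB
    set U := {q : ℕ | q ∈ OX ∧ i ≤ q + s ∧ q ≤ i} with hU
    have hBfin : B.Finite := hfinX.subset (fun p hp => hp.1)
    have hUfin : U.Finite := hfinX.subset (fun p hp => hp.1)
    have hsub : OX ⊆ B ∪ U := by
      intro q hq; by_cases h : q + s < i ∨ i < q
      · exact Or.inl ⟨hq, h⟩
      · push_neg at h; exact Or.inr ⟨hq, by omega⟩
    have hUcard : U.ncard ≤ 1 := by
      rw [Set.ncard_le_one hUfin]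
      rintro a ⟨ha, ha1, ha2⟩ b ⟨hb, hb1, hb2⟩
      by_contra hne
      rcases Nat.lt_or_ge a b with h | h
      · exact no_overlap hs ha hb h (by omega)
      · exact no_overlap hs hb ha (by omega) (by omega)
    have hBcard : B.ncard ≤ OY.ncard := by
      refine Set.ncard_le_ncard_of_injOn (fun q => if q < i then q else q - 1) ?_ ?_ hfinY
      · rintro q ⟨hq, hor⟩
        rw [hOX, Set.mem_setOf_eq, occursAt_iff] at hq
        show (if q < i then q else q - 1) ∈ OY
        rcases hor with h | h
        · rw [if_pos (by omega), hOY, Set.mem_setOf_eq, occursAt_iff]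
          intro j hj
          rw [header_length] at hj
          rw [hget, if_pos (by omega)]
          exact hq j (by rw [header_length]; omega)
        · rw [if_neg (by omega), hOY, Set.mem_setOf_eq, occursAt_iff]
          intro j hj
          rw [header_length] at hj
          rw [hget, if_neg (by omega), show q - 1 + j + 1 = q + j by omega]
          exact hq j (by rw [header_length]; omega)
      · rintro a ⟨_, ha⟩ b ⟨_, hb⟩ h
        have h' : (if a < i then a else a - 1) = (if b < i then b else b - 1) := h
        split_ifs at h' <;> omega
    have h1 : OX.ncard ≤ (B ∪ U).ncard := Set.ncard_le_ncard hsub (hBfin.union hUfin)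
    have h2 : (B ∪ U).ncard ≤ B.ncard + U.ncard := Set.ncard_union_le B U
    omega
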